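/- Vertex addition preserves bearing rigidity: suppose (G, p) is a bearing rigid network in R^d with n nodes, and form G' by adding a new vertex v connected to two existing vertices i and j. If p_v is any point such that p_i, p_j, p_v are not collinear (and p_v is distinct from all p_k), then the network (G', (p, p_v)) is bearing rigid, i.e., its bearing Laplacian has rank d(n+1) - d - 1. -/

import Mathlib

open Matrix

open scoped Classical in
/-- The orthogonal projection matrix `P(x) = I - x xᵀ / ‖x‖²`. -/
noncomputable def proj {d : ℕ} (x : Fin d → ℝ) : Matrix (Fin d) (Fin d) ℝ :=
  1 - (x ⬝ᵥ x)⁻¹ • Matrix.vecMulVec x x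

open scoped Classical in
/-- The bearing Laplacian of the network `(G, p)`: the `dn × dn` block matrix with
`[L]_{ij} = -P(g_{ij})` for edges `(i,j)`, `0` for non-adjacent `i ≠ j`, and
`[L]_{ii} = ∑_{j ∈ N_i} P(g_{ij})`.  Since `proj` is scale-invariant,
`proj (p j - p i) = P(g_{ij})` for the unit bearing `g_{ij}`. -/
noncomputable def bearingLaplacian {V : Type*} [Fintype V] {d : ℕ}
    (G : SimpleGraph V) (p : V → Fin d → ℝ) :
    Matrix (V × Fin d) (V × Fin d) ℝ :=
  fun q r =>
    if q.1 = r.1 then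
      (∑ k ∈ Finset.univ.filter (fun k => G.Adj q.1 k), proj (p k - p q.1)) q.2 r.2
    else if G.Adj q.1 r.1 then -(proj (p r.1 - p q.1) q.2 r.2) else 0

/-!
The kernel of the bearing Laplacian consists of the velocities `u` with
`P(p_b - p_a) (u_a - u_b) = 0` on every edge, because `2 uᵀ L u` is the sum over oriented edges
of the squares `‖P(p_b - p_a) (u_a - u_b)‖²`. The kernel always contains the `(d + 1)`-dimensional
space of translations and scalings, so bearing rigidity says it is exactly that space.
A kernel vector of the augmented network restricts to a trivial motion of `(G, p)`; once that
motion is subtracted, the velocity of `v` is parallel to both `p_i - p_v` and `p_j - p_v`, hence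
zero since the three points are not collinear.
-/

section Proj

variable {d : ℕ}

lemma proj_mulVec (x z : Fin d → ℝ) :
    proj x *ᵥ z = z - ((x ⬝ᵥ x)⁻¹ * (x ⬝ᵥ z)) • x := by
  rw [proj, sub_mulVec, one_mulVec, smul_mulVec, vecMulVec_mulVec, op_smul_eq_smul, smul_smul]

lemma proj_mulVec_self (x : Fin d → ℝ) : proj x *ᵥ x = 0 := by
  rcases eq_or_ne (x ⬝ᵥ x) 0 with hx | hx
  · rw [dotProduct_self_eq_zero.mp hx, mulVec_zero]
  · rw [proj_mulVec, inv_mul_cancel₀ hx, one_smul, sub_self]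

lemma proj_neg (x : Fin d → ℝ) : proj (-x) = proj x := by
  simp [proj]

lemma dotProduct_proj_mulVec (x z : Fin d → ℝ) :
    z ⬝ᵥ (proj x *ᵥ z) = (proj x *ᵥ z) ⬝ᵥ (proj x *ᵥ z) := by
  rcases eq_or_ne (x ⬝ᵥ x) 0 with hx | hx
  · simp [proj_mulVec, hx]
  · simp only [proj_mulVec, sub_dotProduct, dotProduct_sub, dotProduct_smul, smul_dotProduct,
      smul_eq_mul, dotProduct_comm z x]
    field_simp
    ring

lemma exists_eq_smul_of_proj_mulVec_eq_zero {x z : Fin d → ℝ} (h : proj x *ᵥ z = 0) :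
    ∃ c : ℝ, z = c • x :=
  ⟨_, sub_eq_zero.mp ((proj_mulVec x z).symm.trans h)⟩

end Proj

lemma smul_sub_eq_zero_of_not_collinear {k V : Type*} [Field k] [AddCommGroup V] [Module k V]
    {A B C : V} (h : ¬Collinear k ({A, B, C} : Set V)) {α β : k}
    (hαβ : α • (A - C) = β • (B - C)) : α • (A - C) = 0 := by
  by_contra hz
  have hα : α ≠ 0 := by rintro rfl; exact hz (zero_smul _ _)
  apply h
  apply collinear_insert_of_mem_affineSpan_pair
  have hA : A = (α⁻¹ * β) • (B -ᵥ C) +ᵥ C := by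
    rw [mul_smul, vsub_eq_sub, ← hαβ, inv_smul_smul₀ hα, vadd_eq_add, sub_add_cancel]
  rw [hA]
  exact smul_vsub_rev_vadd_mem_affineSpan_pair _ _ _

section TrivialMotion

variable {V : Type*} {d : ℕ} (p : V → Fin d → ℝ)

/-- The infinitesimal translations and scalings `a ↦ w + c • p a` of the configuration `p`. -/
noncomputable def trivialMotion : (Fin d → ℝ) × ℝ →ₗ[ℝ] (V × Fin d → ℝ) where
  toFun wc := Function.uncurry fun a => wc.1 + wc.2 • p a
  map_add' _ _ := by
    ext ⟨a, t⟩
    simp only [Prod.fst_add, Prod.snd_add, Function.uncurry_apply_pair, Pi.add_apply,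
      Pi.smul_apply, smul_eq_mul]
    ring
  map_smul' _ _ := by
    ext ⟨a, t⟩
    simp only [Prod.smul_fst, Prod.smul_snd, smul_eq_mul, Function.uncurry_apply_pair,
      Pi.add_apply, Pi.smul_apply, Real.ringHom_apply]
    ring

lemma curry_trivialMotion (w : Fin d → ℝ) (c : ℝ) (a : V) :
    Function.curry (trivialMotion p (w, c)) a = w + c • p a :=
  rfl

lemma trivialMotion_injective {a b : V} (hab : p a ≠ p b) :
    Function.Injective (trivialMotion p) := by
  rw [← LinearMap.ker_eq_bot, LinearMap.ker_eq_bot']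
  rintro ⟨w, c⟩ h
  have ha : w + c • p a = 0 := congrFun (congrArg Function.curry h) a
  have hb : w + c • p b = 0 := congrFun (congrArg Function.curry h) b
  have hc : c = 0 := by
    have hdiff : c • (p a - p b) = 0 := by linear_combination (norm := module) ha - hb
    exact (smul_eq_zero.1 hdiff).resolve_right (sub_ne_zero.2 hab)
  subst hc
  simpa [Prod.ext_iff] using ha

lemma finrank_range_trivialMotion {a b : V} (hab : p a ≠ p b) :
    Module.finrank ℝ (LinearMap.range (trivialMotion p)) = d + 1 := by
  rw [LinearMap.finrank_range_of_inj (trivialMotion_injective p hab), Module.finrank_prod,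
    Module.finrank_fin_fun, Module.finrank_self]

end TrivialMotion

section BearingLaplacian

variable {V : Type*} [Fintype V] {d : ℕ} (G : SimpleGraph V) (p : V → Fin d → ℝ)

open scoped Classical

lemma bearingLaplacian_mulVec (u : V × Fin d → ℝ) (a : V) :
    Function.curry (bearingLaplacian G p *ᵥ u) a =
      ∑ b with G.Adj a b, proj (p b - p a) *ᵥ (Function.curry u a - Function.curry u b) := by
  ext s
  have hrow : ∀ r : V × Fin d, bearingLaplacian G p (a, s) r =
      (if a = r.1 then ∑ b with G.Adj a b, proj (p b - p a) s r.2 else 0) -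
        if G.Adj a r.1 then proj (p r.1 - p a) s r.2 else 0 := by
    rintro ⟨b, t⟩
    by_cases hab : a = b
    · subst hab; simp [bearingLaplacian, Matrix.sum_apply]
    · by_cases h : G.Adj a b <;> simp [bearingLaplacian, hab, h]
  simp only [Function.curry_apply, mulVec, dotProduct, Fintype.sum_prod_type, hrow, sub_mul,
    ite_mul, zero_mul, Finset.sum_sub_distrib, Finset.sum_apply, Finset.sum_filter, Finset.sum_mul,
    Finset.sum_ite_irrel, Finset.sum_comm (γ := Fin d), Finset.sum_const_zero, Finset.sum_ite_eq,
    Finset.mem_univ, ↓reduceIte, Pi.sub_apply, mul_sub]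

lemma dotProduct_bearingLaplacian_mulVec (u : V × Fin d → ℝ) :
    u ⬝ᵥ (bearingLaplacian G p *ᵥ u) = ∑ a, ∑ b with G.Adj a b,
      Function.curry u a ⬝ᵥ (proj (p b - p a) *ᵥ (Function.curry u a - Function.curry u b)) := by
  simp_rw [← dotProduct_sum, ← bearingLaplacian_mulVec]
  simp only [dotProduct, Fintype.sum_prod_type, Function.curry_apply]

lemma two_mul_dotProduct_bearingLaplacian_mulVec (u : V × Fin d → ℝ) :
    2 * (u ⬝ᵥ (bearingLaplacian G p *ᵥ u)) = ∑ a, ∑ b with G.Adj a b,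
      (Function.curry u a - Function.curry u b) ⬝ᵥ
        (proj (p b - p a) *ᵥ (Function.curry u a - Function.curry u b)) := by
  have hswap : u ⬝ᵥ (bearingLaplacian G p *ᵥ u) = ∑ a, ∑ b with G.Adj a b,
      -(Function.curry u b ⬝ᵥ (proj (p b - p a) *ᵥ (Function.curry u a - Function.curry u b))) := by
    rw [dotProduct_bearingLaplacian_mulVec]
    simp_rw [Finset.sum_filter]
    rw [Finset.sum_comm]
    refine Finset.sum_congr rfl fun a _ => Finset.sum_congr rfl fun b _ => ?_
    rw [G.adj_comm, ← proj_neg, neg_sub, ← neg_sub (Function.curry u a), mulVec_neg, dotProduct_neg]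
  conv_lhs => rw [two_mul]; enter [2]; rw [hswap]
  rw [dotProduct_bearingLaplacian_mulVec, ← Finset.sum_add_distrib]
  simp_rw [← Finset.sum_add_distrib, ← sub_eq_add_neg, ← sub_dotProduct]

lemma bearingLaplacian_mulVec_eq_zero_iff (u : V × Fin d → ℝ) :
    bearingLaplacian G p *ᵥ u = 0 ↔ ∀ a b, G.Adj a b →
      proj (p b - p a) *ᵥ (Function.curry u a - Function.curry u b) = 0 := by
  constructor
  · intro hu a b hab
    have hsum := two_mul_dotProduct_bearingLaplacian_mulVec G p u
    simp_rw [hu, dotProduct_zero, mul_zero, dotProduct_proj_mulVec] at hsum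
    have hnonneg (v : Fin d → ℝ) : 0 ≤ v ⬝ᵥ v := by simpa using dotProduct_star_self_nonneg v
    rw [eq_comm, Finset.sum_eq_zero_iff_of_nonneg fun a _ => Finset.sum_nonneg fun b _ =>
      hnonneg _] at hsum
    rw [← dotProduct_self_eq_zero]
    exact (Finset.sum_eq_zero_iff_of_nonneg fun b _ => hnonneg _).1 (hsum a (Finset.mem_univ a)) b
      (by simpa using hab)
  · intro h
    funext ⟨a, s⟩
    have hrow := congrFun (bearingLaplacian_mulVec G p u a) s
    rw [Finset.sum_eq_zero fun b hb => h a b (by simpa using hb)] at hrow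
    exact hrow

lemma range_trivialMotion_le_ker :
    LinearMap.range (trivialMotion p) ≤ LinearMap.ker (bearingLaplacian G p).mulVecLin := by
  rintro _ ⟨⟨w, c⟩, rfl⟩
  rw [LinearMap.mem_ker, mulVecLin_apply, bearingLaplacian_mulVec_eq_zero_iff]
  intro a b _
  rw [curry_trivialMotion, curry_trivialMotion,
    show w + c • p a - (w + c • p b) = (-c) • (p b - p a) by module, mulVec_smul,
    proj_mulVec_self, smul_zero]

lemma rank_bearingLaplacian_eq_iff {a b : V} (hab : p a ≠ p b) :
    (bearingLaplacian G p).rank = d * Fintype.card V - d - 1 ↔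
      LinearMap.ker (bearingLaplacian G p).mulVecLin = LinearMap.range (trivialMotion p) := by
  have hdim := LinearMap.finrank_range_add_finrank_ker (bearingLaplacian G p).mulVecLin
  rw [Module.finrank_fintype_fun_eq_card, Fintype.card_prod, Fintype.card_fin] at hdim
  have hle := Submodule.finrank_mono (range_trivialMotion_le_ker G p)
  rw [finrank_range_trivialMotion p hab] at hle
  rw [rank, Nat.mul_comm d]
  constructor
  · intro hrank
    refine (Submodule.eq_of_le_of_finrank_le (range_trivialMotion_le_ker G p) ?_).symm
    rw [finrank_range_trivialMotion p hab]
    omega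
  · intro hker
    rw [hker, finrank_range_trivialMotion p hab] at hdim
    omega

lemma ker_bearingLaplacian_option_eq_range {G' : SimpleGraph (Option V)}
    {p' : Option V → Fin d → ℝ} {i j : V} (hG : ∀ a b, G.Adj a b → G'.Adj (some a) (some b))
    (hi : G'.Adj none (some i)) (hj : G'.Adj none (some j))
    (hcol : ¬Collinear ℝ ({p' (some i), p' (some j), p' none} : Set (Fin d → ℝ)))
    (hker : LinearMap.ker (bearingLaplacian G (p' ∘ some)).mulVecLin =
      LinearMap.range (trivialMotion (p' ∘ some))) :
    LinearMap.ker (bearingLaplacian G' p').mulVecLin = LinearMap.range (trivialMotion p') := by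
  refine le_antisymm (fun u hu => ?_) (range_trivialMotion_le_ker G' p')
  have hrestrict : (fun q : V × Fin d => u (some q.1, q.2)) ∈
      LinearMap.ker (bearingLaplacian G (p' ∘ some)).mulVecLin := by
    rw [LinearMap.mem_ker, mulVecLin_apply, bearingLaplacian_mulVec_eq_zero_iff] at hu ⊢
    exact fun a b hab => hu _ _ (hG a b hab)
  obtain ⟨⟨w, c⟩, hwc⟩ := hker ▸ hrestrict
  set e := u - trivialMotion p' (w, c)
  have he : e ∈ LinearMap.ker (bearingLaplacian G' p').mulVecLin :=
    sub_mem hu (range_trivialMotion_le_ker G' p' ⟨_, rfl⟩)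
  rw [LinearMap.mem_ker, mulVecLin_apply, bearingLaplacian_mulVec_eq_zero_iff] at he
  have he_some (a : V) : Function.curry e (some a) = 0 := by
    have := congrFun (congrArg Function.curry hwc) a
    rw [curry_trivialMotion] at this
    change Function.curry u (some a) - (w + c • p' (some a)) = 0
    rw [sub_eq_zero]
    exact this.symm
  have he_none : Function.curry e none = 0 := by
    obtain ⟨α, hα⟩ := exists_eq_smul_of_proj_mulVec_eq_zero (he _ _ hi)
    obtain ⟨β, hβ⟩ := exists_eq_smul_of_proj_mulVec_eq_zero (he _ _ hj)
    rw [he_some, sub_zero] at hα hβ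
    rw [hα]
    exact smul_sub_eq_zero_of_not_collinear hcol (hα.symm.trans hβ)
  refine ⟨(w, c), (sub_eq_zero.1 ?_).symm⟩
  ext ⟨o, t⟩
  cases o with
  | none => exact congrFun he_none t
  | some a => exact congrFun (he_some a) t

end BearingLaplacian

theorem stmt14_general {n d : ℕ} (G : SimpleGraph (Fin n))
    (p : Fin n → Fin d → ℝ)
    (hrigid : (bearingLaplacian G p).rank = d * n - d - 1)
    (i j : Fin n) (pv : Fin d → ℝ)
    (hcol : ¬ Collinear ℝ ({p i, p j, pv} : Set (Fin d → ℝ))) :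
    (bearingLaplacian
      (SimpleGraph.fromRel (fun a b : Option (Fin n) =>
        (∃ x y, a = some x ∧ b = some y ∧ G.Adj x y) ∨
        (a = none ∧ (b = some i ∨ b = some j))))
      (fun o => o.elim pv p)).rank = d * (n + 1) - d - 1 := by
  have hij : p i ≠ p j := ne₁₂_of_not_collinear hcol
  rw [show n + 1 = Fintype.card (Option (Fin n)) by simp,
    rank_bearingLaplacian_eq_iff _ _ (a := some i) (b := some j) hij]
  refine ker_bearingLaplacian_option_eq_range G ?_ ?_ ?_ hcol
    ((rank_bearingLaplacian_eq_iff G p hij).1 (by rwa [Fintype.card_fin]))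
  · intro a b hab
    simp [SimpleGraph.fromRel_adj, hab, hab.ne]
  all_goals simp [SimpleGraph.fromRel_adj]

theorem stmt14 {n d : ℕ} (hd : 2 ≤ d) (G : SimpleGraph (Fin n))
    (p : Fin n → Fin d → ℝ) (hp : Function.Injective p)
    (hrigid : (bearingLaplacian G p).rank = d * n - d - 1)
    (i j : Fin n) (hij : i ≠ j) (pv : Fin d → ℝ)
    (hpv : ∀ k, pv ≠ p k)
    (hcol : ¬ Collinear ℝ ({p i, p j, pv} : Set (Fin d → ℝ))) :
    (bearingLaplacian
      (SimpleGraph.fromRel (fun a b : Option (Fin n) =>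
        (∃ x y, a = some x ∧ b = some y ∧ G.Adj x y) ∨
        (a = none ∧ (b = some i ∨ b = some j))))
      (fun o => o.elim pv p)).rank = d * (n + 1) - d - 1 :=
  stmt14_general G p hrigid i j pv hcol
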